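/- Let α be an ordinal, M a module over a ring A, and (M_n)_{n∈ℕ} an ascending chain of submodules of M. If there exists an α-good list σ of elements of M with ⟨σ⟩ ⊆ M_0, then there exists n ∈ ℕ with M_n = M_{n+1}. In particular, every α-Noetherian module is Noetherian. -/

import Mathlib

open Ordinal

/-- A list is good ((-1)-good) if it is nonempty and its last entry lies in the
submodule generated by the preceding entries. -/
def GoodList (A : Type*) {M : Type*} [Ring A] [AddCommGroup M] [Module A M]
    (σ : List M) : Prop :=
  ∃ (l : List M) (x : M), σ = l ++ [x] ∧ x ∈ Submodule.span A {y | y ∈ l}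

/-- A list `σ` is `α`-good if for every `x`, the appended list `σ.x` is either good
((-1)-good) or `β`-good for some ordinal `β < α`.  A module `M` is `α`-Noetherian
if the empty list `[] : List M` is `α`-good; a ring is `α`-Noetherian if it is
`α`-Noetherian as a left module over itself. -/
def AlphaGood (A : Type*) {M : Type*} [Ring A] [AddCommGroup M] [Module A M]
    (α : Ordinal) (σ : List M) : Prop :=
  ∀ x : M, GoodList A (σ ++ [x]) ∨ ∃ (β : Ordinal) (_ : β < α), AlphaGood A β (σ ++ [x])
termination_by α

/-! Induction on `α`: if the chain does not stall at once, pick `x ∈ N 1 \ N 0`.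
Then `σ.x` cannot be good, since `⟨σ⟩ ≤ N 0`, so it is `β`-good for some `β < α` and spans
into `N 1`; the induction hypothesis applied to the shifted chain `N (n + 1)` gives the
stall. -/

section

variable {A M : Type*} [Ring A] [AddCommGroup M] [Module A M]

theorem goodList_append_singleton_iff {σ : List M} {x : M} :
    GoodList A (σ ++ [x]) ↔ x ∈ Submodule.span A {y | y ∈ σ} := by
  constructor
  · rintro ⟨l, y, heq, hy⟩
    obtain ⟨rfl, hxy⟩ := List.append_inj' heq rfl
    rwa [List.singleton_inj.1 hxy]
  · exact fun hx => ⟨σ, x, rfl, hx⟩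

theorem span_append_singleton (σ : List M) (x : M) :
    Submodule.span A {y | y ∈ σ ++ [x]} = Submodule.span A {y | y ∈ σ} ⊔ A ∙ x := by
  rw [← Submodule.span_union]
  congr 1
  ext y
  simp [or_comm]

theorem AlphaGood.exists_eq_succ {α : Ordinal} {σ : List M} (hσ : AlphaGood A α σ)
    {N : ℕ → Submodule A M} (hN : Monotone N) (hσN : Submodule.span A {x | x ∈ σ} ≤ N 0) :
    ∃ n, N n = N (n + 1) := by
  induction α using WellFoundedLT.induction generalizing σ N with
  | _ α ih =>
    by_cases h01 : N 0 = N 1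
    · exact ⟨0, h01⟩
    obtain ⟨x, hx1, hx0⟩ := SetLike.exists_of_lt (lt_of_le_of_ne (hN zero_le_one) h01)
    rw [AlphaGood] at hσ
    rcases hσ x with hgood | ⟨β, hβα, hβ⟩
    · exact absurd (hσN (goodList_append_singleton_iff.1 hgood)) hx0
    · have hσxN : Submodule.span A {y | y ∈ σ ++ [x]} ≤ N 1 := by
        rw [span_append_singleton]
        exact sup_le (hσN.trans (hN zero_le_one)) ((Submodule.span_singleton_le_iff_mem _ _).2 hx1)
      obtain ⟨n, hn⟩ := ih β hβα hβ (hN.comp fun _ _ h => Nat.succ_le_succ h) hσxN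
      exact ⟨n + 1, hn⟩

theorem AlphaGood.isNoetherian {α : Ordinal} (h : AlphaGood A α ([] : List M)) :
    IsNoetherian A M := by
  rw [isNoetherian_iff']
  refine ⟨RelEmbedding.wellFounded_iff_isEmpty.2 ⟨fun N => ?_⟩⟩
  have hN : ∀ n, N n < N (n + 1) := fun n => N.map_rel_iff.2 n.lt_succ_self
  obtain ⟨n, hn⟩ := h.exists_eq_succ (strictMono_nat_of_lt_succ hN).monotone (by simp)
  exact (hN n).ne hn

end

/-- If there is an `α`-good list `σ` with `⟨σ⟩ ⊆ N 0` for an ascending chain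
`(N n)` of submodules, then the chain stalls at some step; in particular every
`α`-Noetherian module is Noetherian. -/
theorem chain_stalls_and_noetherian {A M : Type*} [Ring A] [AddCommGroup M]
    [Module A M] (α : Ordinal) :
    (∀ N : ℕ → Submodule A M, Monotone N →
      (∃ σ : List M, AlphaGood A α σ ∧ Submodule.span A {x | x ∈ σ} ≤ N 0) →
      ∃ n : ℕ, N n = N (n + 1)) ∧
    (AlphaGood A α ([] : List M) → IsNoetherian A M) :=
  ⟨fun _ hN ⟨_, hσ, hσN⟩ => hσ.exists_eq_succ hN hσN, AlphaGood.isNoetherian⟩
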